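/- For any positive real Q ≥ 1 and positive integer q ≤ Q, the sum ∑_{k ≤ Q/q} 1/φ(kq) is O(log(2Q/q)/φ(q)), with an absolute implied constant. That is, there is an absolute constant c > 0 such that ∑_{1 ≤ k ≤ Q/q} 1/φ(kq) ≤ c · log(2Q/q)/φ(q). -/

import Mathlib

/-!
Super-multiplicativity of `φ` gives `1/φ(kq) ≤ 1/(φ(k) φ(q))`, so it suffices to show
`∑_{n ≤ N} 1/φ(n) ≪ 1 + log N`. Comparing Euler products,
`n² ∏_{p ∣ n} (1 - p⁻²) = n ∏ (1 - p⁻¹) · n ∏ (1 + p⁻¹) ≤ φ(n) σ(n)`, and the product is at least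
`1/2` because `∏_{k=2}^m (1 - k⁻²) = (m + 1)/(2m)` telescopes. Hence
`1/φ(n) ≤ 2 σ(n)/n² = 2 ∑_{ab = n} 1/(a² b)`, and exchanging the order of summation bounds
`∑_{n ≤ N} σ(n)/n²` by `∑_a a⁻² · H_N ≤ 2 (1 + log N)`.
-/
open Finset ArithmeticFunction
open scoped ArithmeticFunction.sigma Nat

theorem prod_Icc_two_one_sub_inv_sq {m : ℕ} (hm : 1 ≤ m) :
    ∏ k ∈ Icc 2 m, (1 - ((k : ℝ) ^ 2)⁻¹) = (m + 1) / (2 * m) := by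
  induction m, hm using Nat.le_induction with
  | base => norm_num
  | succ m hm ih =>
    rw [prod_Icc_succ_top (by omega), ih]
    have : (m : ℝ) ≠ 0 := by positivity
    push_cast
    field_simp
    ring

theorem one_sub_inv_sq_mem_Icc {k : ℕ} (hk : 1 ≤ k) : 1 - ((k : ℝ) ^ 2)⁻¹ ∈ Set.Icc 0 1 := by
  have : (1 : ℝ) ≤ (k : ℝ) ^ 2 := one_le_pow₀ (by exact_mod_cast hk)
  exact ⟨sub_nonneg.2 (inv_le_one_of_one_le₀ this), sub_le_self _ (by positivity)⟩

theorem one_half_le_prod_one_sub_inv_sq {s : Finset ℕ} (hs : ∀ k ∈ s, 2 ≤ k) :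
    1 / 2 ≤ ∏ k ∈ s, (1 - ((k : ℝ) ^ 2)⁻¹) := by
  set m := s.sup id + 1
  have hsm : s ⊆ Icc 2 m := fun k hk => mem_Icc.2 ⟨hs k hk, Nat.le_succ_of_le (le_sup (f := id) hk)⟩
  calc (1 : ℝ) / 2 ≤ (m + 1) / (2 * m) := by
        rw [div_le_div_iff₀ (by norm_num) (by positivity)]; linarith
    _ = ∏ k ∈ Icc 2 m, (1 - ((k : ℝ) ^ 2)⁻¹) := (prod_Icc_two_one_sub_inv_sq (by omega)).symm
    _ = (∏ k ∈ Icc 2 m \ s, (1 - ((k : ℝ) ^ 2)⁻¹)) * ∏ k ∈ s, (1 - ((k : ℝ) ^ 2)⁻¹) :=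
        (prod_sdiff hsm).symm
    _ ≤ ∏ k ∈ s, (1 - ((k : ℝ) ^ 2)⁻¹) := by
        have hIcc : ∀ k ∈ Icc 2 m \ s, 1 - ((k : ℝ) ^ 2)⁻¹ ∈ Set.Icc 0 1 := fun k hk =>
          one_sub_inv_sq_mem_Icc (by have := (mem_Icc.1 (mem_sdiff.1 hk).1).1; omega)
        refine mul_le_of_le_one_left (prod_nonneg fun k hk => ?_)
          (prod_le_one (fun k hk => (hIcc k hk).1) (fun k hk => (hIcc k hk).2))
        exact (one_sub_inv_sq_mem_Icc (by have := hs k hk; omega)).1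

theorem pow_mul_one_add_inv_le_sigma_one {p k : ℕ} (hp : p.Prime) (hk : k ≠ 0) :
    (p : ℝ) ^ k * (1 + (p : ℝ)⁻¹) ≤ σ 1 (p ^ k) := by
  obtain ⟨j, rfl⟩ := Nat.exists_eq_succ_of_ne_zero hk
  have hp0 : (p : ℝ) ≠ 0 := by exact_mod_cast hp.ne_zero
  rw [sigma_one_apply_prime_pow hp]
  push_cast
  rw [sum_range_succ, sum_range_succ]
  have : (p : ℝ) ^ (j + 1) * (1 + (p : ℝ)⁻¹) = p ^ j + p ^ (j + 1) := by
    field_simp; ring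
  rw [this, add_assoc]
  exact le_add_of_nonneg_left (sum_nonneg fun i _ => by positivity)

theorem mul_prod_one_add_inv_le_sigma_one (n : ℕ) :
    (n : ℝ) * ∏ p ∈ n.primeFactors, (1 + (p : ℝ)⁻¹) ≤ σ 1 n := by
  rcases eq_or_ne n 0 with rfl | hn
  · simp
  have hσ : (σ 1 n : ℝ) = ∏ p ∈ n.primeFactors, (σ 1 (p ^ n.factorization p) : ℝ) := by
    have := (isMultiplicative_sigma (k := 1)).natCast (R := ℝ) |>.multiplicative_factorization _ hn
    simpa [Nat.prod_factorization_eq_prod_primeFactors] using this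
  have hn' : (n : ℝ) = ∏ p ∈ n.primeFactors, (p : ℝ) ^ n.factorization p := by
    conv_lhs => rw [← Nat.prod_factorization_pow_eq_self hn]
    rw [Nat.prod_factorization_eq_prod_primeFactors]; push_cast; rfl
  rw [hσ, hn', ← prod_mul_distrib]
  refine prod_le_prod (fun p hp => ?_) fun p hp => ?_
  · positivity
  · exact pow_mul_one_add_inv_le_sigma_one (Nat.prime_of_mem_primeFactors hp)
      (Nat.support_factorization n ▸ hp |> Finsupp.mem_support_iff.1)

theorem totient_eq_mul_prod_one_sub_inv (n : ℕ) :
    (φ n : ℝ) = n * ∏ p ∈ n.primeFactors, (1 - (p : ℝ)⁻¹) := by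
  have := congrArg (fun x : ℚ => (x : ℝ)) (Nat.totient_eq_mul_prod_factors n)
  push_cast at this
  exact this

theorem sq_le_two_mul_totient_mul_sigma_one (n : ℕ) : (n : ℝ) ^ 2 ≤ 2 * φ n * σ 1 n := by
  have hprod := one_half_le_prod_one_sub_inv_sq (s := n.primeFactors)
    fun p hp => (Nat.prime_of_mem_primeFactors hp).two_le
  have hprod_nonneg : 0 ≤ ∏ p ∈ n.primeFactors, (1 - (p : ℝ)⁻¹) := prod_nonneg fun p hp =>
    sub_nonneg.2 (inv_le_one_of_one_le₀ (by exact_mod_cast (Nat.prime_of_mem_primeFactors hp).one_le))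
  calc (n : ℝ) ^ 2 ≤ 2 * (n ^ 2 * ∏ p ∈ n.primeFactors, (1 - ((p : ℝ) ^ 2)⁻¹)) := by nlinarith
    _ = 2 * (n * ∏ p ∈ n.primeFactors, (1 - (p : ℝ)⁻¹)) *
          (n * ∏ p ∈ n.primeFactors, (1 + (p : ℝ)⁻¹)) := by
        have hsplit : ∏ p ∈ n.primeFactors, (1 - ((p : ℝ) ^ 2)⁻¹) =
            (∏ p ∈ n.primeFactors, (1 - (p : ℝ)⁻¹)) * ∏ p ∈ n.primeFactors, (1 + (p : ℝ)⁻¹) := by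
          rw [← prod_mul_distrib]
          exact prod_congr rfl fun p _ => by ring
        rw [hsplit]; ring
    _ ≤ 2 * φ n * σ 1 n := by
        rw [totient_eq_mul_prod_one_sub_inv]
        gcongr
        exact mul_prod_one_add_inv_le_sigma_one n

theorem inv_totient_le_two_mul_sigma_one_div_sq (n : ℕ) :
    (φ n : ℝ)⁻¹ ≤ 2 * (σ 1 n / n ^ 2) := by
  rcases eq_or_ne n 0 with rfl | hn
  · simp
  have hφ : (0 : ℝ) < φ n := by exact_mod_cast Nat.totient_pos.2 (Nat.pos_of_ne_zero hn)
  rw [inv_le_iff_one_le_mul₀ hφ, mul_div_assoc', div_mul_eq_mul_div, one_le_div (by positivity)]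
  linarith [sq_le_two_mul_totient_mul_sigma_one n]

theorem sum_Ioc_inv_le_one_add_log (N : ℕ) : ∑ k ∈ Ioc 0 N, (k : ℝ)⁻¹ ≤ 1 + Real.log N := by
  have := harmonic_le_one_add_log N
  rw [harmonic_eq_sum_Icc] at this
  push_cast at this
  exact this

theorem sigma_one_div_sq_eq_sum_divisorsAntidiagonal (n : ℕ) :
    (σ 1 n : ℝ) / n ^ 2 = ∑ x ∈ n.divisorsAntidiagonal, ((x.1 : ℝ) ^ 2)⁻¹ * (x.2 : ℝ)⁻¹ := by
  rw [sigma_one_apply, Nat.cast_sum, sum_div, ← Nat.sum_divisorsAntidiagonal' (fun _ b => (b : ℝ) / n ^ 2)]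
  refine sum_congr rfl fun x hx => ?_
  obtain ⟨rfl, hn⟩ := Nat.mem_divisorsAntidiagonal.1 hx
  have h1 : (x.1 : ℝ) ≠ 0 := by exact_mod_cast left_ne_zero_of_mul hn
  have h2 : (x.2 : ℝ) ≠ 0 := by exact_mod_cast right_ne_zero_of_mul hn
  push_cast
  field_simp

theorem sum_Ioc_sigma_one_div_sq_le (N : ℕ) :
    ∑ n ∈ Ioc 0 N, (σ 1 n : ℝ) / n ^ 2 ≤ 2 * (1 + Real.log N) := by
  let invSq : ArithmeticFunction ℝ := ⟨fun n => ((n : ℝ) ^ 2)⁻¹, by simp⟩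
  let inv : ArithmeticFunction ℝ := ⟨fun n => (n : ℝ)⁻¹, by simp⟩
  have hlog : 0 ≤ 1 + Real.log N := by
    have := Real.log_natCast_nonneg N
    linarith
  calc ∑ n ∈ Ioc 0 N, (σ 1 n : ℝ) / n ^ 2 = ∑ n ∈ Ioc 0 N, (invSq * inv) n := by
        simp only [sigma_one_div_sq_eq_sum_divisorsAntidiagonal, mul_apply]; rfl
    _ = ∑ a ∈ Ioc 0 N, ((a : ℝ) ^ 2)⁻¹ * ∑ b ∈ Ioc 0 (N / a), (b : ℝ)⁻¹ :=
        sum_Ioc_mul_eq_sum_sum invSq inv N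
    _ ≤ ∑ a ∈ Ioc 0 N, ((a : ℝ) ^ 2)⁻¹ * (1 + Real.log N) := by
        gcongr with a
        calc ∑ b ∈ Ioc 0 (N / a), (b : ℝ)⁻¹ ≤ ∑ b ∈ Ioc 0 N, (b : ℝ)⁻¹ :=
              sum_le_sum_of_subset_of_nonneg (Ioc_subset_Ioc_right (Nat.div_le_self N a))
                fun _ _ _ => by positivity
          _ ≤ 1 + Real.log N := sum_Ioc_inv_le_one_add_log N
    _ ≤ 2 * (1 + Real.log N) := by
        rw [← sum_mul]
        gcongr
        simpa [Ioo_add_one_right_eq_Ioc] using sum_Ioo_inv_sq_le (α := ℝ) 0 (N + 1)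

theorem sum_Ioc_inv_totient_le (N : ℕ) :
    ∑ n ∈ Ioc 0 N, (φ n : ℝ)⁻¹ ≤ 4 * (1 + Real.log N) :=
  calc ∑ n ∈ Ioc 0 N, (φ n : ℝ)⁻¹ ≤ ∑ n ∈ Ioc 0 N, 2 * ((σ 1 n : ℝ) / n ^ 2) :=
        sum_le_sum fun n _ => inv_totient_le_two_mul_sigma_one_div_sq n
    _ ≤ 4 * (1 + Real.log N) := by
        rw [← mul_sum]
        linarith [sum_Ioc_sigma_one_div_sq_le N]

theorem inv_totient_mul_le (k q : ℕ) : (φ (k * q) : ℝ)⁻¹ ≤ (φ k : ℝ)⁻¹ * (φ q : ℝ)⁻¹ := by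
  rcases eq_or_ne (k * q) 0 with h | h
  · rw [h, Nat.totient_zero, Nat.cast_zero, inv_zero]
    positivity
  rw [← mul_inv]
  have hk : 0 < φ k := Nat.totient_pos.2 (Nat.pos_of_ne_zero (left_ne_zero_of_mul h))
  have hq : 0 < φ q := Nat.totient_pos.2 (Nat.pos_of_ne_zero (right_ne_zero_of_mul h))
  exact inv_anti₀ (by positivity) (by exact_mod_cast Nat.totient_super_multiplicative k q)

theorem one_add_log_le_log_two_mul_div_log_two {x : ℝ} (hx : 1 ≤ x) :
    1 + Real.log x ≤ Real.log (2 * x) / Real.log 2 := by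
  have hlog2 : 0 < Real.log 2 := Real.log_pos one_lt_two
  have hlog2_le : Real.log 2 ≤ 1 := by
    linarith [Real.log_le_sub_one_of_pos (zero_lt_two' ℝ)]
  rw [le_div_iff₀ hlog2, Real.log_mul two_ne_zero (by linarith)]
  nlinarith [Real.log_nonneg hx]

/-- There is an absolute constant `c > 0` such that for every real `Q ≥ 1` and every
positive integer `q ≤ Q`, `∑_{1 ≤ k ≤ Q/q} 1/φ(kq) ≤ c · log(2Q/q)/φ(q)`. -/
theorem stmt_2 :
    ∃ c : ℝ, 0 < c ∧ ∀ (Q : ℝ) (q : ℕ), 1 ≤ Q → 0 < q → (q : ℝ) ≤ Q →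
      ∑ k ∈ Finset.Icc 1 ⌊Q / (q : ℝ)⌋₊, (1 : ℝ) / (Nat.totient (k * q))
        ≤ c * Real.log (2 * Q / q) / (Nat.totient q) := by
  refine ⟨4 / Real.log 2, by positivity, fun Q q _ hq hqQ => ?_⟩
  set N := ⌊Q / (q : ℝ)⌋₊
  have hQq : 1 ≤ Q / q := (one_le_div (by positivity)).2 hqQ
  have hN : (1 : ℝ) ≤ N := by exact_mod_cast Nat.le_floor (by exact_mod_cast hQq)
  have hlogN : Real.log N ≤ Real.log (Q / q) :=
    Real.log_le_log (by positivity) (Nat.floor_le (by positivity))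
  -- `Icc 1 N` and `Ioc 0 N` are definitionally equal.
  calc ∑ k ∈ Icc 1 N, (1 : ℝ) / φ (k * q)
      ≤ ∑ k ∈ Ioc 0 N, (φ k : ℝ)⁻¹ * (φ q : ℝ)⁻¹ :=
        sum_le_sum fun k _ => (one_div _).trans_le (inv_totient_mul_le k q)
    _ ≤ 4 * (1 + Real.log (Q / q)) * (φ q : ℝ)⁻¹ := by
        rw [← sum_mul]
        gcongr
        linarith [sum_Ioc_inv_totient_le N]
    _ ≤ 4 * (Real.log (2 * (Q / q)) / Real.log 2) * (φ q : ℝ)⁻¹ := by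
        gcongr
        exact one_add_log_le_log_two_mul_div_log_two hQq
    _ = 4 / Real.log 2 * Real.log (2 * Q / q) / φ q := by
        rw [mul_div_assoc 2 Q]; ring
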